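/- arXiv:1603.03842 — 3 statements merged into one kernel-verified Lean document; each statement's English description precedes it below -/
import Mathlib

section
/- Let G be a group and H a subgroup such that H is amenable and there exists a G-invariant mean on ℓ^∞(G/H) (i.e., G acts amenably on the homogeneous space G/H). Then G is amenable. -/
/-- The space `ℓ^∞(X)` of bounded real-valued functions on a set `X`,
as a submodule of `X → ℝ`. -/
def ellInfty (X : Type*) : Submodule ℝ (X → ℝ) where
  carrier := {f | ∃ C, ∀ x, |f x| ≤ C}
  add_mem' := by
    rintro f g ⟨C, hC⟩ ⟨D, hD⟩
    exact ⟨C + D, fun x => (abs_add_le _ _).trans (add_le_add (hC x) (hD x))⟩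
  zero_mem' := ⟨0, fun x => by simp⟩
  smul_mem' := by
    rintro c f ⟨C, hC⟩
    exact ⟨|c| * C, fun x => by
      simpa [abs_mul] using mul_le_mul_of_nonneg_left (hC x) (abs_nonneg c)⟩

/-- The constant function `1` as an element of `ℓ^∞(X)`. -/
def oneFn (X : Type*) : ellInfty X := ⟨fun _ => 1, ⟨1, fun _ => by norm_num⟩⟩

/-- A mean on `ℓ^∞(X)`: a positive unital linear functional. -/
def IsMean {X : Type*} (m : ellInfty X →ₗ[ℝ] ℝ) : Prop :=
  (∀ f : ellInfty X, (∀ x, 0 ≤ f.1 x) → 0 ≤ m f) ∧ m (oneFn X) = 1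

/-- The action of `g : G` on `ℓ^∞(X)` induced by an action of `G` on `X`:
`(g · f)(x) = f(g⁻¹ • x)`. -/
def actL {G X : Type*} [Group G] [MulAction G X] (g : G) (f : ellInfty X) : ellInfty X :=
  ⟨fun x => f.1 (g⁻¹ • x), by obtain ⟨C, hC⟩ := f.2; exact ⟨C, fun x => hC _⟩⟩

/-- Existence of a `G`-invariant mean on `ℓ^∞(X)`. -/
def HasInvMean (G X : Type*) [Group G] [MulAction G X] : Prop :=
  ∃ m : ellInfty X →ₗ[ℝ] ℝ, IsMean m ∧ ∀ (g : G) (f : ellInfty X), m (actL g f) = m f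

/-- A group is amenable if there is a left-translation-invariant mean on `ℓ^∞(G)`. -/
def Amenable (G : Type*) [Group G] : Prop := HasInvMean G G

/-! Average `f ∈ ℓ^∞(G)` over each coset `gH` with the invariant mean of `H`; by `H`-invariance
the result depends only on the coset, which gives a positive, unital, `G`-equivariant map
`ℓ^∞(G) → ℓ^∞(G/H)`. Composing it with the `G`-invariant mean on `ℓ^∞(G/H)` gives a
`G`-invariant mean on `ℓ^∞(G)`. -/

theorem IsMean.abs_le {X : Type*} {m : ellInfty X →ₗ[ℝ] ℝ} (hm : IsMean m)
    (f : ellInfty X) {C : ℝ} (hf : ∀ x, |f.1 x| ≤ C) : |m f| ≤ C := by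
  have upper : 0 ≤ m (C • oneFn X - f) :=
    hm.1 _ fun x => by simpa [oneFn] using (_root_.abs_le.mp (hf x)).2
  have lower : 0 ≤ m (C • oneFn X + f) :=
    hm.1 _ fun x => by simpa [oneFn, neg_le_iff_add_nonneg'] using (_root_.abs_le.mp (hf x)).1
  rw [map_sub, map_smul, hm.2, smul_eq_mul, mul_one] at upper
  rw [map_add, map_smul, hm.2, smul_eq_mul, mul_one] at lower
  exact _root_.abs_le.mpr ⟨by linarith, by linarith⟩

theorem IsMean.comp {X Y : Type*} {m : ellInfty Y →ₗ[ℝ] ℝ} (hm : IsMean m)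
    {T : ellInfty X →ₗ[ℝ] ellInfty Y} (hpos : ∀ f, (∀ x, 0 ≤ f.1 x) → ∀ y, 0 ≤ (T f).1 y)
    (hone : T (oneFn X) = oneFn Y) : IsMean (m ∘ₗ T) :=
  ⟨fun f hf => hm.1 _ (hpos f hf), by rw [LinearMap.comp_apply, hone, hm.2]⟩

theorem HasInvMean.of_equivariant {G X Y : Type*} [Group G] [MulAction G X] [MulAction G Y]
    (hY : HasInvMean G Y) (T : ellInfty X →ₗ[ℝ] ellInfty Y)
    (hpos : ∀ f, (∀ x, 0 ≤ f.1 x) → ∀ y, 0 ≤ (T f).1 y) (hone : T (oneFn X) = oneFn Y)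
    (hT : ∀ (g : G) f, T (actL g f) = actL g (T f)) : HasInvMean G X := by
  obtain ⟨m, hm, hinv⟩ := hY
  exact ⟨m ∘ₗ T, hm.comp hpos hone, fun g f => by simp only [LinearMap.comp_apply, hT, hinv]⟩

section Coset

variable {G : Type*} [Group G] (H : Subgroup G)

def restrictCoset (g : G) : ellInfty G →ₗ[ℝ] ellInfty H where
  toFun f := ⟨fun h => f.1 (g * h), by obtain ⟨C, hC⟩ := f.2; exact ⟨C, fun h => hC _⟩⟩
  map_add' _ _ := rfl
  map_smul' _ _ := rfl

theorem restrictCoset_mul (g : G) (h : H) (f : ellInfty G) :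
    restrictCoset H (g * h) f = actL h⁻¹ (restrictCoset H g f) := by
  ext k
  simp [restrictCoset, actL, mul_assoc]

theorem restrictCoset_actL (g g' : G) (f : ellInfty G) :
    restrictCoset H g' (actL g f) = restrictCoset H (g⁻¹ * g') f := by
  ext k
  simp [restrictCoset, actL, mul_assoc]

theorem mean_restrictCoset_eq_of_mk_eq {mH : ellInfty H →ₗ[ℝ] ℝ}
    (hinv : ∀ (h : H) φ, mH (actL h φ) = mH φ) (f : ellInfty G) {g₁ g₂ : G}
    (hg : (g₁ : G ⧸ H) = g₂) : mH (restrictCoset H g₁ f) = mH (restrictCoset H g₂ f) := by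
  obtain ⟨h, rfl⟩ : ∃ h : H, g₁ * h = g₂ := ⟨⟨g₁⁻¹ * g₂, QuotientGroup.eq.mp hg⟩, by simp⟩
  rw [restrictCoset_mul, hinv]

variable {H} {mH : ellInfty H →ₗ[ℝ] ℝ}

noncomputable def cosetAverage (hm : IsMean mH) : ellInfty G →ₗ[ℝ] ellInfty (G ⧸ H) where
  toFun f := ⟨fun x => mH (restrictCoset H x.out f), by
    obtain ⟨C, hC⟩ := f.2; exact ⟨C, fun x => hm.abs_le _ fun h => hC _⟩⟩
  map_add' f₁ f₂ := by ext x; simp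
  map_smul' c f := by ext x; simp

theorem cosetAverage_nonneg (hm : IsMean mH) (f : ellInfty G) (hf : ∀ g, 0 ≤ f.1 g)
    (x : G ⧸ H) : 0 ≤ (cosetAverage hm f).1 x :=
  hm.1 _ fun _ => hf _

theorem cosetAverage_one (hm : IsMean mH) : cosetAverage hm (oneFn G) = oneFn (G ⧸ H) := by
  ext x
  exact hm.2

theorem cosetAverage_actL (hm : IsMean mH) (hinv : ∀ (h : H) φ, mH (actL h φ) = mH φ)
    (g : G) (f : ellInfty G) : cosetAverage hm (actL g f) = actL g (cosetAverage hm f) := by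
  ext x
  show mH (restrictCoset H x.out (actL g f)) = mH (restrictCoset H (g⁻¹ • x).out f)
  rw [restrictCoset_actL]
  refine mean_restrictCoset_eq_of_mk_eq H hinv f ?_
  rw [QuotientGroup.out_eq', ← smul_eq_mul, ← MulAction.Quotient.smul_coe, QuotientGroup.out_eq']

end Coset

/-- if `H ≤ G` is amenable and there is a `G`-invariant mean on
`ℓ^∞(G/H)`, then `G` is amenable. -/
theorem amenable_of_amenable_subgroup_and_invariant_mean_on_quotient
    {G : Type*} [Group G] (H : Subgroup G)
    (hH : Amenable H) (hGH : HasInvMean G (G ⧸ H)) : Amenable G := by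
  obtain ⟨mH, hm, hinv⟩ := hH
  exact hGH.of_equivariant (cosetAverage hm) (cosetAverage_nonneg hm) (cosetAverage_one hm)
    (cosetAverage_actL hm hinv)
end

section
/- Every abelian group is amenable (existence of an invariant mean on ℓ^∞(G) for G abelian). -/
section TranslateAvg

variable {G X ι κ : Type*} [Monoid G] [MulAction G X] [Fintype ι] [Fintype κ]

noncomputable def translateAvg (a : ι → G) (f : X → ℝ) (x : X) : ℝ :=
  (∑ i, f (a i • x)) / Fintype.card ι

lemma translateAvg_comp_equiv (a : ι → G) (e : κ ≃ ι) (f : X → ℝ) :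
    translateAvg (a ∘ e) f = translateAvg a f := by
  ext x
  simp only [translateAvg, Function.comp_apply, Equiv.sum_comp e (fun i => f (a i • x)),
    Fintype.card_congr e]

lemma translateAvg_prod (a : ι → G) (b : κ → G) (f : X → ℝ) :
    translateAvg (fun p : ι × κ => a p.1 * b p.2) f = translateAvg b (translateAvg a f) := by
  ext x
  simp only [translateAvg, mul_smul, Fintype.sum_prod_type_right, Fintype.card_prod,
    Nat.cast_mul, ← Finset.sum_div, div_div]

lemma translateAvg_mono (a : ι → G) {f h : X → ℝ} (hfh : f ≤ h) :
    translateAvg a f ≤ translateAvg a h := fun _ =>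
  div_le_div_of_nonneg_right (Finset.sum_le_sum fun _ _ => hfh _) (Nat.cast_nonneg _)

lemma translateAvg_const [Nonempty ι] (a : ι → G) (c : ℝ) :
    translateAvg a (fun _ : X => c) = fun _ => c := by
  ext x
  simp [translateAvg]

lemma translateAvg_add (a : ι → G) (f h : X → ℝ) :
    translateAvg a (f + h) = translateAvg a f + translateAvg a h := by
  ext x
  simp only [translateAvg, Pi.add_apply, Finset.sum_add_distrib, add_div]

lemma translateAvg_smul (a : ι → G) (c : ℝ) (f : X → ℝ) :
    translateAvg a (c • f) = c • translateAvg a f := by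
  ext x
  simp only [translateAvg, Pi.smul_apply, smul_eq_mul, ← Finset.mul_sum, mul_div_assoc]

lemma translateAvg_le_of_le [Nonempty ι] (a : ι → G) {f : X → ℝ} {C : ℝ} (hf : ∀ x, f x ≤ C)
    (x : X) : translateAvg a f x ≤ C := by
  simpa [translateAvg_const] using translateAvg_mono a hf x

lemma le_translateAvg_of_le [Nonempty ι] (a : ι → G) {f : X → ℝ} {C : ℝ} (hf : ∀ x, C ≤ f x)
    (x : X) : C ≤ translateAvg a f x := by
  simpa [translateAvg_const] using translateAvg_mono a hf x

lemma translateAvg_pow_sub (g : G) (n : ℕ) (f : X → ℝ) (x : X) :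
    translateAvg (fun i : Fin n => g ^ (i : ℕ)) (fun y => f (g • y) - f y) x
    = (f (g ^ n • x) - f x) / n := by
  simp only [translateAvg, Fintype.card_fin, smul_smul, ← pow_succ']
  rw [Fin.sum_univ_eq_sum_range (fun i => f (g ^ (i + 1) • x) - f (g ^ i • x)),
    Finset.sum_range_sub (fun i => f (g ^ i • x)), pow_zero, one_smul]

end TranslateAvg

lemma translateAvg_prod_comm {G X ι κ : Type*} [CommMonoid G] [MulAction G X] [Fintype ι]
    [Fintype κ] (a : ι → G) (b : κ → G) (f : X → ℝ) :
    translateAvg (fun p : ι × κ => a p.1 * b p.2) f = translateAvg a (translateAvg b f) := by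
  rw [← translateAvg_prod b a, ← translateAvg_comp_equiv _ (Equiv.prodComm ι κ)]
  simp only [Function.comp_def, Equiv.prodComm_apply, Prod.fst_swap, Prod.snd_swap, mul_comm]

section UpperMean

variable (G : Type*) {X : Type*} [Monoid G] [MulAction G X]

-- Families are indexed by `ℕ+`: the empty family would average every `f` to `0 / 0 = 0`.
noncomputable def upperMean (f : X → ℝ) : ℝ :=
  ⨅ a : Σ n : ℕ+, Fin n → G, ⨆ x, translateAvg a.2 f x

variable {G} {f : X → ℝ}

lemma upperMean_smul {c : ℝ} (hc : 0 ≤ c) (f : X → ℝ) :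
    upperMean G (c • f) = c * upperMean G f := by
  simp only [upperMean, translateAvg_smul, Pi.smul_apply, smul_eq_mul,
    Real.mul_iSup_of_nonneg hc, Real.mul_iInf_of_nonneg hc]

variable {ι : Type*} [Fintype ι] [Nonempty ι]

lemma bddAbove_range_translateAvg (hf : f ∈ ellInfty X) (a : ι → G) :
    BddAbove (Set.range (translateAvg a f)) := by
  obtain ⟨C, hC⟩ := hf
  exact ⟨C, Set.forall_mem_range.2 (translateAvg_le_of_le a fun x => (abs_le.1 (hC x)).2)⟩

variable [Nonempty X]

lemma le_iSup_translateAvg (hf : f ∈ ellInfty X) {C : ℝ} (hC : ∀ x, C ≤ f x) (a : ι → G) :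
    C ≤ ⨆ x, translateAvg a f x := by
  obtain ⟨x⟩ := ‹Nonempty X›
  exact (le_translateAvg_of_le a hC x).trans (le_ciSup (bddAbove_range_translateAvg hf a) x)

lemma le_upperMean (hf : f ∈ ellInfty X) {C : ℝ} (hC : ∀ x, C ≤ f x) : C ≤ upperMean G f :=
  have : Nonempty (Σ n : ℕ+, Fin n → G) := ⟨⟨1, fun _ => 1⟩⟩
  le_ciInf fun a => le_iSup_translateAvg hf hC a.2

lemma upperMean_le_iSup_translateAvg (hf : f ∈ ellInfty X) (a : ι → G) :
    upperMean G f ≤ ⨆ x, translateAvg a f x := by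
  have hbdd : BddBelow (Set.range fun a : Σ n : ℕ+, Fin n → G => ⨆ x, translateAvg a.2 f x) := by
    obtain ⟨C, hC⟩ := id hf
    exact ⟨-C, Set.forall_mem_range.2 fun a =>
      le_iSup_translateAvg hf (fun x => neg_le_of_abs_le (hC x)) a.2⟩
  calc upperMean G f ≤ ⨆ x, translateAvg (a ∘ (Fintype.equivFin ι).symm) f x :=
      ciInf_le hbdd ⟨⟨Fintype.card ι, Fintype.card_pos⟩, _⟩
    _ = ⨆ x, translateAvg a f x := by rw [translateAvg_comp_equiv]

lemma upperMean_le (hf : f ∈ ellInfty X) {C : ℝ} (hC : ∀ x, f x ≤ C) : upperMean G f ≤ C :=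
  (upperMean_le_iSup_translateAvg hf fun _ : Unit => (1 : G)).trans
    (ciSup_le (translateAvg_le_of_le _ hC))

lemma upperMean_smul_sub_nonpos (hf : f ∈ ellInfty X) (g : G) :
    upperMean G (fun x => f (g • x) - f x) ≤ 0 := by
  obtain ⟨C, hC⟩ := id hf
  have hmem : (fun x => f (g • x) - f x) ∈ ellInfty X :=
    ⟨2 * C, fun x => (abs_sub _ _).trans (by linarith [hC (g • x), hC x])⟩
  have hle : ∀ n : ℕ, 0 < n → upperMean G (fun x => f (g • x) - f x) ≤ 2 * C / n := by
    intro n hn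
    have : NeZero n := ⟨hn.ne'⟩
    refine (upperMean_le_iSup_translateAvg hmem fun i : Fin n => g ^ (i : ℕ)).trans
      (ciSup_le fun x => ?_)
    rw [translateAvg_pow_sub]
    gcongr
    linarith [(abs_le.1 (hC (g ^ n • x))).2, (abs_le.1 (hC x)).1]
  exact ge_of_tendsto (tendsto_const_div_atTop_nhds_zero_nat (2 * C))
    ((Filter.eventually_gt_atTop 0).mono hle)

end UpperMean

lemma upperMean_add_le {G X : Type*} [CommMonoid G] [MulAction G X] [Nonempty X] {f h : X → ℝ}
    (hf : f ∈ ellInfty X) (hh : h ∈ ellInfty X) :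
    upperMean G (f + h) ≤ upperMean G f + upperMean G h := by
  refine le_ciInf_add_ciInf fun a b => ?_
  refine (upperMean_le_iSup_translateAvg (add_mem hf hh)
    fun p : Fin a.1 × Fin b.1 => a.2 p.1 * b.2 p.2).trans (ciSup_le fun x => ?_)
  rw [translateAvg_add, Pi.add_apply]
  nth_rw 1 [translateAvg_prod]
  rw [translateAvg_prod_comm]
  exact add_le_add
    (translateAvg_le_of_le _ (le_ciSup (bddAbove_range_translateAvg hf a.2)) x)
    (translateAvg_le_of_le _ (le_ciSup (bddAbove_range_translateAvg hh b.2)) x)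

section MeanOfLeUpperMean

variable {G X : Type*} {m : ellInfty X →ₗ[ℝ] ℝ} [Nonempty X]

lemma isMean_of_le_upperMean [Monoid G] [MulAction G X]
    (hm : ∀ f : ellInfty X, m f ≤ upperMean G (f : X → ℝ)) : IsMean m := by
  refine ⟨fun f hf => ?_, ?_⟩
  · have h := (hm (-f)).trans (upperMean_le (-f).2 fun x => neg_nonpos.2 (hf x))
    rw [map_neg] at h
    linarith
  · have h1 := (hm (oneFn X)).trans (upperMean_le (C := 1) (oneFn X).2 fun _ => le_rfl)
    have h2 := (hm (-oneFn X)).trans (upperMean_le (C := -1) (-oneFn X).2 fun _ => le_rfl)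
    rw [map_neg] at h2
    linarith

lemma map_actL_of_le_upperMean [Group G] [MulAction G X]
    (hm : ∀ f : ellInfty X, m f ≤ upperMean G (f : X → ℝ)) (g : G) (f : ellInfty X) :
    m (actL g f) = m f := by
  have h1 : m (actL g f - f) ≤ 0 := (hm _).trans (upperMean_smul_sub_nonpos f.2 g⁻¹)
  have hcoe : ((f - actL g f : ellInfty X) : X → ℝ)
      = fun x => (actL g f : X → ℝ) (g • x) - (actL g f : X → ℝ) x := by
    ext x
    simp [actL]
  have h2 : m (f - actL g f) ≤ 0 :=
    (hm _).trans (hcoe ▸ upperMean_smul_sub_nonpos (actL g f).2 g)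
  rw [map_sub] at h1 h2
  linarith

end MeanOfLeUpperMean

lemma exists_linearMap_le_upperMean (G X : Type*) [CommMonoid G] [MulAction G X] [Nonempty X] :
    ∃ m : ellInfty X →ₗ[ℝ] ℝ, ∀ f : ellInfty X, m f ≤ upperMean G (f : X → ℝ) := by
  obtain ⟨m, -, hm⟩ := exists_extension_of_le_sublinear ⟨⊥, 0⟩
    (fun f : ellInfty X => upperMean G (f : X → ℝ))
    (fun c hc f => by rw [Submodule.coe_smul]; exact upperMean_smul hc.le _)
    (fun f h => by rw [Submodule.coe_add]; exact upperMean_add_le f.2 h.2)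
    fun ⟨f, hf⟩ => by
      rw [Submodule.mem_bot] at hf
      subst hf
      exact le_upperMean (zero_mem _) fun _ => le_rfl
  exact ⟨m, hm⟩

theorem hasInvMean_of_commGroup (G X : Type*) [CommGroup G] [MulAction G X] [Nonempty X] :
    HasInvMean G X :=
  have ⟨m, hm⟩ := exists_linearMap_le_upperMean G X
  ⟨m, isMean_of_le_upperMean hm, map_actL_of_le_upperMean hm⟩

/-- every abelian group is amenable. -/
theorem amenable_of_comm (G : Type*) [CommGroup G] : Amenable G :=
  hasInvMean_of_commGroup G G
end

section
/- Let A be a Banach algebra and X a faithful right Banach A-module (for every nonzero x ∈ X there is a ∈ A with x·a ≠ 0). If there exists a bounded A-module map Φ : B(A, X) → X with Φ ∘ Δ = id_X, where Δ(x)(a) = x·a, then there exists a bounded A⁺-module map Φ⁺ : B(A⁺, X) → X with Φ⁺ ∘ Δ⁺ = id_X and ‖Φ⁺‖ ≤ ‖Φ‖. -/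
variable {A X : Type*}

/-- The multiplication of the unitization `A⁺ = A ⊕₁ ℂ`, realized on `A × ℂ`. -/
def umul [NonUnitalNormedRing A] [NormedSpace ℂ A] (x y : A × ℂ) : A × ℂ :=
  (x.1 * y.1 + x.2 • y.1 + y.2 • x.1, x.2 * y.2)

/-- The unitization `A⁺` with its ℓ¹-norm `‖a + λe‖ = ‖a‖ + |λ|`. -/
abbrev Aplus (A : Type*) [NonUnitalNormedRing A] := WithLp 1 (A × ℂ)

/-!
Restriction along the isometric embedding `ι : A → A⁺` turns `Φ` into `Φ⁺ Ψ = Φ (Ψ ∘ ι)`.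
Since `ι` has norm at most one, so does restriction, giving `‖Φ⁺‖ ≤ ‖Φ‖`; and since `ι` is
multiplicative, `(Ψ·a) ∘ ι = (Ψ ∘ ι)·a` and `Δ⁺(x) ∘ ι = Δ(x)`, so the module property and the
splitting property of `Φ` pass to `Φ⁺`.
-/

namespace ContinuousLinearMap

variable {𝕜 E F G : Type*} [NontriviallyNormedField 𝕜]
  [SeminormedAddCommGroup E] [SeminormedAddCommGroup F] [SeminormedAddCommGroup G]
  [NormedSpace 𝕜 E] [NormedSpace 𝕜 F] [NormedSpace 𝕜 G]

theorem norm_compL_flip_le (ι : E →L[𝕜] F) : ‖(compL 𝕜 E F G).flip ι‖ ≤ ‖ι‖ :=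
  opNorm_le_bound _ (norm_nonneg ι) fun Ψ => by
    simpa [mul_comm] using Ψ.opNorm_comp_le ι

end ContinuousLinearMap

namespace Aplus

variable (A) [NonUnitalNormedRing A] [NormedSpace ℂ A]

noncomputable def inl : A →ₗᵢ[ℂ] Aplus A where
  toFun a := WithLp.toLp 1 (a, 0)
  map_add' a b := by rw [← WithLp.toLp_add, Prod.mk_add_mk, add_zero]
  map_smul' c a := by rw [← WithLp.toLp_smul, Prod.smul_mk, smul_zero]; rfl
  norm_map' := WithLp.norm_toLp_fst 1 A ℂ

@[simp]
theorem inl_apply (a : A) : inl A a = WithLp.toLp 1 (a, 0) := rfl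

end Aplus

@[simp]
theorem umul_mk_zero_mk_zero [NonUnitalNormedRing A] [NormedSpace ℂ A] (a b : A) :
    umul (a, 0) (b, 0) = (a * b, (0 : ℂ)) := by
  simp [umul]

theorem relative_injectivity_unitization_general
    [NonUnitalNormedRing A] [NormedSpace ℂ A]
    [NormedAddCommGroup X] [NormedSpace ℂ X]
    (act : X →ₗ[ℂ] A →ₗ[ℂ] X)
    (Φ : (A →L[ℂ] X) →L[ℂ] X)
    -- `Φ` is an `A`-module map for the action `(Ψ·a)(b) = Ψ(ab)` on `B(A,X)`:
    (hΦmod : ∀ (Ψ Ψ' : A →L[ℂ] X) (a : A),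
      (∀ b : A, Ψ' b = Ψ (a * b)) → Φ Ψ' = act (Φ Ψ) a)
    -- `Φ ∘ Δ = id_X`, where `Δ(x)(a) = x·a`:
    (hΦΔ : ∀ (x : X) (D : A →L[ℂ] X), (∀ a : A, D a = act x a) → Φ D = x) :
    ∃ Φp : (Aplus A →L[ℂ] X) →L[ℂ] X,
      ‖Φp‖ ≤ ‖Φ‖ ∧
      -- `Φ⁺` is an `A`-module map (hence `A⁺`-module map) for `(Ψ·a)(u) = Ψ(au)`:
      (∀ (Ψ Ψ' : Aplus A →L[ℂ] X) (a : A),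
        (∀ u : Aplus A, Ψ' u =
            Ψ ((WithLp.equiv 1 (A × ℂ)).symm
              (umul (a, 0) (WithLp.equiv 1 (A × ℂ) u)))) →
        Φp Ψ' = act (Φp Ψ) a) ∧
      -- `Φ⁺ ∘ Δ⁺ = id_X`, where `Δ⁺(x)(a + λe) = x·a + λx`:
      (∀ (x : X) (D : Aplus A →L[ℂ] X),
        (∀ u : Aplus A, D u =
            act x (WithLp.equiv 1 (A × ℂ) u).1 + (WithLp.equiv 1 (A × ℂ) u).2 • x) →
        Φp D = x) := by
  let ι := (Aplus.inl A).toContinuousLinearMap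
  let restrict := (ContinuousLinearMap.compL ℂ A (Aplus A) X).flip ι
  have hrestrict : ‖restrict‖ ≤ 1 :=
    (ContinuousLinearMap.norm_compL_flip_le ι).trans (Aplus.inl A).norm_toContinuousLinearMap_le
  refine ⟨Φ.comp restrict, ?_, ?_, ?_⟩
  · calc ‖Φ.comp restrict‖ ≤ ‖Φ‖ * ‖restrict‖ := Φ.opNorm_comp_le restrict
      _ ≤ ‖Φ‖ * 1 := by gcongr
      _ = ‖Φ‖ := mul_one _
  · intro Ψ Ψ' a hΨ'
    exact hΦmod _ _ a fun b => by simpa [restrict, ι] using hΨ' (Aplus.inl A b)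
  · intro x D hD
    exact hΦΔ x _ fun a => by simpa [restrict, ι] using hD (Aplus.inl A a)

/-- if `X` is a faithful right Banach `A`-module and there is a bounded
`A`-module map `Φ : B(A, X) → X` with `Φ ∘ Δ = id`, then there is a bounded
`A⁺`-module map `Φ⁺ : B(A⁺, X) → X` with `Φ⁺ ∘ Δ⁺ = id` and `‖Φ⁺‖ ≤ ‖Φ‖`. -/
theorem relative_injectivity_unitization
    [NonUnitalNormedRing A] [NormedSpace ℂ A] [IsScalarTower ℂ A A]
    [SMulCommClass ℂ A A] [CompleteSpace A]
    [NormedAddCommGroup X] [NormedSpace ℂ X] [CompleteSpace X]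
    (act : X →ₗ[ℂ] A →ₗ[ℂ] X)
    (hassoc : ∀ (x : X) (a b : A), act (act x a) b = act x (a * b))
    (hbound : ∀ (x : X) (a : A), ‖act x a‖ ≤ ‖x‖ * ‖a‖)
    (hfaithful : ∀ x : X, x ≠ 0 → ∃ a : A, act x a ≠ 0)
    (Φ : (A →L[ℂ] X) →L[ℂ] X)
    -- `Φ` is an `A`-module map for the action `(Ψ·a)(b) = Ψ(ab)` on `B(A,X)`:
    (hΦmod : ∀ (Ψ Ψ' : A →L[ℂ] X) (a : A),
      (∀ b : A, Ψ' b = Ψ (a * b)) → Φ Ψ' = act (Φ Ψ) a)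
    -- `Φ ∘ Δ = id_X`, where `Δ(x)(a) = x·a`:
    (hΦΔ : ∀ (x : X) (D : A →L[ℂ] X), (∀ a : A, D a = act x a) → Φ D = x) :
    ∃ Φp : (Aplus A →L[ℂ] X) →L[ℂ] X,
      ‖Φp‖ ≤ ‖Φ‖ ∧
      -- `Φ⁺` is an `A`-module map (hence `A⁺`-module map) for `(Ψ·a)(u) = Ψ(au)`:
      (∀ (Ψ Ψ' : Aplus A →L[ℂ] X) (a : A),
        (∀ u : Aplus A, Ψ' u =
            Ψ ((WithLp.equiv 1 (A × ℂ)).symm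
              (umul (a, 0) (WithLp.equiv 1 (A × ℂ) u)))) →
        Φp Ψ' = act (Φp Ψ) a) ∧
      -- `Φ⁺ ∘ Δ⁺ = id_X`, where `Δ⁺(x)(a + λe) = x·a + λx`:
      (∀ (x : X) (D : Aplus A →L[ℂ] X),
        (∀ u : Aplus A, D u =
            act x (WithLp.equiv 1 (A × ℂ) u).1 + (WithLp.equiv 1 (A × ℂ) u).2 • x) →
        Φp D = x) :=
  relative_injectivity_unitization_general act Φ hΦmod hΦΔ
end
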